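/- The density of squarefree positive integers is 1/ζ(2) = 6/π²: the number of squarefree integers in [1,n] divided by n tends to 6/π² as n → ∞. -/

import Mathlib

open Filter
open scoped Classical

/-!
Since `∑_{d² ∣ k} μ(d)` is the indicator of squarefree `k`, the number of squarefree `k ≤ n` is
`∑_d μ(d) ⌊n / d²⌋`. After dividing by `n`, the `d`-th term tends to `μ(d) / d²` and is bounded
by `1 / d²`, so by dominated convergence for series (Tannery's theorem) the density is
`∑_d μ(d) / d² = 1 / ζ(2) = 6 / π²`.
-/

open ArithmeticFunction Finset
open scoped ArithmeticFunction.Moebius Topology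

namespace Nat

theorem sq_dvd_sq_mul_iff_dvd {a b d : ℕ} (ha : Squarefree a) : d ^ 2 ∣ b ^ 2 * a ↔ d ∣ b := by
  refine ⟨fun h => ?_, fun h => (pow_dvd_pow_of_dvd h 2).mul_right a⟩
  rcases eq_or_ne b 0 with rfl | hb
  · exact dvd_zero d
  have ha0 := ha.ne_zero
  have hd : d ≠ 0 := by rintro rfl; simp_all
  rw [← factorization_le_iff_dvd (pow_ne_zero 2 hd) (mul_ne_zero (pow_ne_zero 2 hb) ha0)] at h
  rw [← factorization_le_iff_dvd hd hb]
  intro p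
  have hp := h p
  simp only [factorization_mul (pow_ne_zero 2 hb) ha0, factorization_pow, Finsupp.add_apply,
    Finsupp.smul_apply, smul_eq_mul] at hp
  have := ha.natFactorization_le_one p
  omega

theorem divisors_filter_sq_dvd {a b : ℕ} (ha : Squarefree a) (hb : b ≠ 0) :
    {d ∈ (b ^ 2 * a).divisors | d ^ 2 ∣ b ^ 2 * a} = b.divisors := by
  ext d
  simp only [mem_filter, mem_divisors, sq_dvd_sq_mul_iff_dvd ha]
  exact ⟨fun h => ⟨h.2, hb⟩, fun h => ⟨⟨(dvd_pow_self d two_ne_zero).trans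
    ((sq_dvd_sq_mul_iff_dvd ha).2 h.1), mul_ne_zero (pow_ne_zero 2 hb) ha.ne_zero⟩, h.1⟩⟩

theorem tendsto_natCast_div_div_atTop (c : ℕ) :
    Tendsto (fun n : ℕ => ((n / c : ℕ) : ℝ) / n) atTop (𝓝 (1 / c)) := by
  refine ((tendsto_nat_floor_mul_div_atTop (a := (1 / c : ℝ)) (by positivity)).comp
    tendsto_natCast_atTop_atTop).congr fun n => ?_
  simp [← floor_div_eq_div (K := ℝ), div_eq_inv_mul]

theorem natCast_div_div_le (n c : ℕ) : ((n / c : ℕ) : ℝ) / n ≤ 1 / c := by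
  rcases eq_or_ne n 0 with rfl | hn
  · simp
  calc ((n / c : ℕ) : ℝ) / n ≤ (n / c : ℝ) / n := by gcongr; exact cast_div_le
    _ = 1 / c := by field_simp

end Nat

namespace ArithmeticFunction

theorem sum_moebius_filter_sq_dvd {n : ℕ} (hn : n ≠ 0) :
    ∑ d ∈ n.divisors with d ^ 2 ∣ n, μ d = if Squarefree n then 1 else 0 := by
  obtain ⟨a, b, -, hb, rfl, ha⟩ := Nat.sq_mul_squarefree_of_pos (Nat.pos_of_ne_zero hn)
  rw [Nat.divisors_filter_sq_dvd ha hb.ne', ← coe_mul_zeta_apply, moebius_mul_coe_zeta, one_apply]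
  refine if_congr ⟨fun h => by simpa [h] using ha, fun h => ?_⟩ rfl rfl
  exact Nat.isUnit_iff.1 (h b ⟨b ^ 0 * a, by ring⟩)

theorem card_filter_squarefree_Icc_eq_sum_moebius (n : ℕ) :
    (#{k ∈ Icc 1 n | Squarefree k} : ℤ) = ∑ d ∈ range (n + 1), μ d * (n / d ^ 2 : ℕ) := by
  calc (#{k ∈ Icc 1 n | Squarefree k} : ℤ)
      = ∑ k ∈ Icc 1 n, ∑ d ∈ k.divisors with d ^ 2 ∣ k, μ d := by
        rw [card_filter, Nat.cast_sum]
        refine sum_congr rfl fun k hk => ?_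
        rw [sum_moebius_filter_sq_dvd (by simp at hk; omega)]
        push_cast
        rfl
    _ = ∑ d ∈ range (n + 1), ∑ k ∈ Icc 1 n with d ^ 2 ∣ k, μ d := by
        refine sum_comm' fun k d => ?_
        simp only [mem_filter, mem_Icc, Nat.mem_divisors, mem_range]
        constructor
        · rintro ⟨hk, ⟨hdk, -⟩, hd⟩
          exact ⟨⟨hk, hd⟩, Nat.lt_succ_of_le ((Nat.le_of_dvd hk.1 hdk).trans hk.2)⟩
        · rintro ⟨⟨hk, hd⟩, -⟩
          exact ⟨hk, ⟨(dvd_pow_self d two_ne_zero).trans hd, by omega⟩, hd⟩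
    _ = ∑ d ∈ range (n + 1), μ d * (n / d ^ 2 : ℕ) := by
        refine sum_congr rfl fun d _ => ?_
        rw [sum_const, nsmul_eq_mul, mul_comm, ← Nat.Ioc_filter_dvd_card_eq_div]
        rfl

theorem card_filter_squarefree_Icc_div_eq_tsum (n : ℕ) :
    (#{k ∈ Icc 1 n | Squarefree k} : ℝ) / n = ∑' d, (μ d : ℝ) * (((n / d ^ 2 : ℕ) : ℝ) / n) := by
  rw [tsum_eq_sum (s := range (n + 1)) fun d hd => ?_]
  · have h := congrArg (Int.cast : ℤ → ℝ) (card_filter_squarefree_Icc_eq_sum_moebius n)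
    simp only [Int.cast_sum, Int.cast_mul, Int.cast_natCast] at h
    simp_rw [← mul_div_assoc, ← sum_div, h]
  · have hnd : n < d ^ 2 := by
      have := Nat.le_self_pow two_ne_zero d
      simp only [mem_range, not_lt] at hd
      omega
    simp [Nat.div_eq_of_lt hnd]

theorem tsum_moebius_div_sq : ∑' d : ℕ, (μ d : ℝ) / d ^ 2 = 6 / Real.pi ^ 2 := by
  have hL : LSeries (fun n => μ n) 2 = 6 / Real.pi ^ 2 := by
    have h := LSeries_one_mul_Lseries_moebius (s := 2) (by norm_num)
    rw [LSeries_one_eq_riemannZeta (by norm_num), riemannZeta_two] at h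
    have hπ : (Real.pi : ℂ) ≠ 0 := by exact_mod_cast Real.pi_ne_zero
    field_simp at h ⊢
    linear_combination h
  apply Complex.ofReal_injective
  rw [Complex.ofReal_tsum]
  push_cast
  rw [← hL, LSeries]
  refine tsum_congr fun d => ?_
  rcases eq_or_ne d 0 with rfl | hd
  · simp
  · rw [LSeries.term_of_ne_zero hd]
    norm_cast

end ArithmeticFunction

/-- The density of squarefree positive integers is `6 / π² = 1 / ζ(2)`. -/
theorem squarefree_density :
    Tendsto (fun n : ℕ =>
        (((Finset.Icc 1 n).filter (fun k : ℕ => Squarefree k)).card : ℝ) / (n : ℝ))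
      atTop (nhds (6 / Real.pi ^ 2)) := by
  simp_rw [card_filter_squarefree_Icc_div_eq_tsum, ← tsum_moebius_div_sq,
    div_eq_mul_one_div (μ _ : ℝ)]
  refine tendsto_tsum_of_dominated_convergence (Real.summable_one_div_nat_pow.mpr one_lt_two)
    (fun d => ?_) (Eventually.of_forall fun n d => ?_)
  · have h := (Nat.tendsto_natCast_div_div_atTop (d ^ 2)).const_mul (μ d : ℝ)
    rwa [Nat.cast_pow] at h
  · rw [norm_mul, Real.norm_eq_abs, Real.norm_of_nonneg (by positivity)]
    calc |(μ d : ℝ)| * (((n / d ^ 2 : ℕ) : ℝ) / n) ≤ 1 * (((n / d ^ 2 : ℕ) : ℝ) / n) := by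
          gcongr
          exact_mod_cast abs_moebius_le_one
      _ ≤ 1 / (d : ℝ) ^ 2 := by
          rw [one_mul, ← Nat.cast_pow]
          exact Nat.natCast_div_div_le n (d ^ 2)
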